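/- Let X_{0:T−1} = 𝐋 W_{0:T−1} be a k-causal Gaussian process on ℝ^d with decoupled process X̃_{0:T−1}, and suppose λ_min(Σ_{t=0}^{T−1} E[X̃_t X̃_tᵀ]) > 0. Then λ_max(E[X_{0:T−1} X_{0:T−1}ᵀ]) / λ_min(Σ_{t=0}^{T−1} E[X_t X_tᵀ]) ≤ (Σ_{t=0}^{T−1} λ_max(E[X_t X_tᵀ])) / λ_min(Σ_{t=0}^{T−1} E[X̃_t X̃_tᵀ]). -/

import Mathlib

open MeasureTheory ProbabilityTheory Matrix

/-- The standard Gaussian measure (mean zero, identity covariance) on `ι → ℝ`. -/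
noncomputable def stdGaussian (ι : Type*) [Fintype ι] : Measure (ι → ℝ) :=
  Measure.pi fun _ => gaussianReal 0 1

/-- Smallest eigenvalue of a real symmetric matrix, via the Rayleigh quotient. -/
noncomputable def lamMin {n : Type*} [Fintype n] (M : Matrix n n ℝ) : ℝ :=
  ⨅ v : {v : n → ℝ // ∑ i, v i ^ 2 = 1}, (v : n → ℝ) ⬝ᵥ (M *ᵥ (v : n → ℝ))

/-- Largest eigenvalue of a real symmetric matrix, via the Rayleigh quotient. -/
noncomputable def lamMax {n : Type*} [Fintype n] (M : Matrix n n ℝ) : ℝ :=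
  ⨆ v : {v : n → ℝ // ∑ i, v i ^ 2 = 1}, (v : n → ℝ) ⬝ᵥ (M *ᵥ (v : n → ℝ))

/-- The `(i,j)` block (of size `dk × pk`) of a block matrix `𝐋 ∈ ℝ^{dT×pT}` with
`T = N·k`, where the time index is encoded as a pair in `Fin N × Fin k`. -/
def Lblk {N k d p : ℕ} (L : Matrix (Fin N × Fin k × Fin d) (Fin N × Fin k × Fin p) ℝ)
    (i j : Fin N) : Matrix (Fin k × Fin d) (Fin k × Fin p) ℝ :=
  Matrix.of fun r c => L (i, r) (j, c)

/-- `E[X_t X_tᵀ]` for the process `X = 𝐋 W`, at time `t = (j,s)`. -/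
noncomputable def covX {d p k N : ℕ}
    (L : Matrix (Fin N × Fin k × Fin d) (Fin N × Fin k × Fin p) ℝ)
    (j : Fin N) (s : Fin k) : Matrix (Fin d) (Fin d) ℝ :=
  Matrix.of fun a b =>
    ∫ w, (L *ᵥ w) (j, s, a) * (L *ᵥ w) (j, s, b) ∂(stdGaussian (Fin N × Fin k × Fin p))

/-- `E[X̃_t X̃_tᵀ]` for the decoupled process `X̃ = blkdiag(𝐋_{11},…,𝐋_{NN}) W`,
at time `t = (j,s)`. -/
noncomputable def covXtilde {d p k N : ℕ}
    (L : Matrix (Fin N × Fin k × Fin d) (Fin N × Fin k × Fin p) ℝ)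
    (j : Fin N) (s : Fin k) : Matrix (Fin d) (Fin d) ℝ :=
  Matrix.of fun a b =>
    ∫ w, ((Lblk L j j) *ᵥ (fun c => w (j, c))) (s, a)
        * ((Lblk L j j) *ᵥ (fun c => w (j, c))) (s, b)
      ∂(stdGaussian (Fin N × Fin k × Fin p))

/-- `E[X_{0:T−1} X_{0:T−1}ᵀ]`, the covariance of the full stacked vector `𝐋 W`. -/
noncomputable def fullCov {d p k N : ℕ}
    (L : Matrix (Fin N × Fin k × Fin d) (Fin N × Fin k × Fin p) ℝ) :
    Matrix (Fin N × Fin k × Fin d) (Fin N × Fin k × Fin d) ℝ :=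
  Matrix.of fun r r' =>
    ∫ w, (L *ᵥ w) r * (L *ᵥ w) r' ∂(stdGaussian (Fin N × Fin k × Fin p))

open Real
open scoped ENNReal NNReal

/-! ### Product integrals over pi measures -/

section PiProd

lemma myIntegrable_fin_prod {n : ℕ} (μ : Fin n → Measure ℝ) [∀ i, IsProbabilityMeasure (μ i)]
    {f : Fin n → ℝ → ℝ} (hf : ∀ i, Integrable (f i) (μ i)) :
    Integrable (fun x : Fin n → ℝ => ∏ i, f i (x i)) (Measure.pi μ) := by
  induction n with
  | zero => simp [integrable_const]
  | succ n ih =>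
    have h := (measurePreserving_piFinSuccAbove μ 0).symm
    rw [← h.integrable_comp_emb (MeasurableEquiv.measurableEmbedding _)]
    simp_rw [MeasurableEquiv.piFinSuccAbove_symm_apply, Fin.insertNthEquiv,
      Fin.prod_univ_succ, Fin.insertNth_zero]
    simp only [Fin.zero_succAbove, Function.comp_def, Fin.cons_zero, Fin.cons_succ,
      Equiv.coe_fn_mk, cast_eq]
    have : Integrable (fun x : Fin n → ℝ => ∏ j, f (Fin.succ j) (x j))
        (Measure.pi fun j => μ (Fin.succ j)) := ih _ (fun i => hf _)
    exact Integrable.mul_prod (hf 0) this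

lemma myIntegral_fin_prod {n : ℕ} (μ : Fin n → Measure ℝ) [∀ i, IsProbabilityMeasure (μ i)]
    (f : Fin n → ℝ → ℝ) :
    ∫ x : Fin n → ℝ, ∏ i, f i (x i) ∂(Measure.pi μ) = ∏ i, ∫ x, f i x ∂(μ i) := by
  induction n with
  | zero => simp
  | succ n ih =>
    calc
      _ = ∫ x : ℝ × (Fin n → ℝ), f 0 x.1 * ∏ i : Fin n, f (Fin.succ i) (x.2 i)
          ∂((μ 0).prod (Measure.pi fun j => μ (Fin.succ j))) := by
        rw [← ((measurePreserving_piFinSuccAbove μ 0).symm).integral_comp']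
        simp_rw [MeasurableEquiv.piFinSuccAbove_symm_apply, Fin.insertNthEquiv,
          Fin.prod_univ_succ, Fin.insertNth_zero, Equiv.coe_fn_mk, Fin.cons_succ,
          Fin.zero_succAbove, Fin.cons_zero, cast_eq]
      _ = (∫ x, f 0 x ∂(μ 0)) * ∏ i : Fin n, ∫ x, f (Fin.succ i) x ∂(μ (Fin.succ i)) := by
        rw [← ih, ← integral_prod_mul]
      _ = ∏ i, ∫ x, f i x ∂(μ i) := by rw [Fin.prod_univ_succ]

lemma myIntegrable_prod {ι : Type*} [Fintype ι] (μ : Measure ℝ) [IsProbabilityMeasure μ]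
    {f : ι → ℝ → ℝ} (hf : ∀ i, Integrable (f i) μ) :
    Integrable (fun x : ι → ℝ => ∏ i, f i (x i)) (Measure.pi fun _ => μ) := by
  let e := (Fintype.equivFin ι).symm
  rw [← (measurePreserving_piCongrLeft (fun _ : ι => μ) e).integrable_comp_emb
    (MeasurableEquiv.measurableEmbedding _)]
  simp_rw [← e.prod_comp, MeasurableEquiv.coe_piCongrLeft, Function.comp_def,
    Equiv.piCongrLeft_apply_apply]
  exact myIntegrable_fin_prod _ (fun i => hf _)

lemma myIntegral_prod {ι : Type*} [Fintype ι] (μ : Measure ℝ) [IsProbabilityMeasure μ]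
    (f : ι → ℝ → ℝ) :
    ∫ x : ι → ℝ, ∏ i, f i (x i) ∂(Measure.pi fun _ => μ) = ∏ i, ∫ x, f i x ∂μ := by
  let e := (Fintype.equivFin ι).symm
  rw [← (measurePreserving_piCongrLeft (fun _ : ι => μ) e).integral_comp']
  simp_rw [← e.prod_comp, MeasurableEquiv.coe_piCongrLeft, Equiv.piCongrLeft_apply_apply,
    myIntegral_fin_prod]

end PiProd

/-! ### Moments of the standard Gaussian -/

section Gaussian

lemma gr_eq : gaussianReal 0 1
    = (volume : Measure ℝ).withDensity
        (fun x => ((gaussianPDFReal 0 1 x).toNNReal : ℝ≥0∞)) := by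
  rw [gaussianReal_of_var_ne_zero _ one_ne_zero]
  rfl

lemma g_integral (g : ℝ → ℝ) :
    ∫ x, g x ∂(gaussianReal 0 1) = ∫ x, gaussianPDFReal 0 1 x * g x := by
  rw [gr_eq, integral_withDensity_eq_integral_smul
    ((measurable_gaussianPDFReal 0 1).real_toNNReal) g]
  congr 1
  funext x
  simp [NNReal.smul_def, Real.coe_toNNReal _ (gaussianPDFReal_nonneg 0 1 x)]

lemma g_integrable_iff (g : ℝ → ℝ) :
    Integrable g (gaussianReal 0 1)
      ↔ Integrable (fun x => gaussianPDFReal 0 1 x * g x) volume := by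
  rw [gr_eq, integrable_withDensity_iff_integrable_smul
    ((measurable_gaussianPDFReal 0 1).real_toNNReal)]
  constructor
  · intro h
    refine h.congr (Filter.Eventually.of_forall fun x => ?_)
    simp [NNReal.smul_def, Real.coe_toNNReal _ (gaussianPDFReal_nonneg 0 1 x)]
  · intro h
    refine h.congr (Filter.Eventually.of_forall fun x => ?_)
    simp [NNReal.smul_def, Real.coe_toNNReal _ (gaussianPDFReal_nonneg 0 1 x)]

lemma pdf_eq (x : ℝ) :
    gaussianPDFReal 0 1 x = (√(2 * π))⁻¹ * rexp (-(1/2) * x ^ 2) := by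
  rw [gaussianPDFReal]
  norm_num
  left
  ring

lemma integrable_id_g : Integrable (fun x : ℝ => x) (gaussianReal 0 1) := by
  rw [g_integrable_iff]
  have h := (integrable_mul_exp_neg_mul_sq (b := 1/2) (by norm_num)).const_mul (√(2 * π))⁻¹
  apply h.congr
  filter_upwards with x
  rw [pdf_eq]
  ring

lemma integrable_sq_g : Integrable (fun x : ℝ => x ^ 2) (gaussianReal 0 1) := by
  rw [g_integrable_iff]
  have h := (integrable_rpow_mul_exp_neg_mul_sq (b := 1/2) (by norm_num)
    (s := 2) (by norm_num)).const_mul (√(2 * π))⁻¹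
  apply h.congr
  filter_upwards with x
  rw [pdf_eq, show x ^ (2:ℝ) = x ^ (2:ℕ) by rw [← Real.rpow_natCast x 2]; norm_num]
  ring

lemma integral_id_g : ∫ x, x ∂(gaussianReal 0 1) = 0 := by
  rw [g_integral]
  have h : ∫ x : ℝ, gaussianPDFReal 0 1 x * x
      = ∫ x : ℝ, gaussianPDFReal 0 1 (-x) * (-x) :=
    (integral_neg_eq_self (fun x => gaussianPDFReal 0 1 x * x) volume).symm
  have h2 : ∀ x : ℝ, gaussianPDFReal 0 1 (-x) * (-x) = -(gaussianPDFReal 0 1 x * x) := by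
    intro x
    rw [pdf_eq, pdf_eq]
    ring_nf
  have key : (∫ x : ℝ, gaussianPDFReal 0 1 x * x)
      = -(∫ x : ℝ, gaussianPDFReal 0 1 x * x) := by
    conv_lhs => rw [h]
    simp_rw [h2]
    exact integral_neg _
  linarith

/-- The second moment of the standard Gaussian (only its nonnegativity is used). -/
noncomputable def sigSq : ℝ := ∫ x, x ^ 2 ∂(gaussianReal 0 1)

lemma sigSq_nonneg : 0 ≤ sigSq :=
  integral_nonneg fun x => sq_nonneg x

end Gaussian

/-! ### Second moments of coordinates of the standard Gaussian vector -/

section Coord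

variable {ι : Type*} [Fintype ι] [DecidableEq ι]

private noncomputable def cf (c c' : ι) (i : ι) (x : ℝ) : ℝ :=
  (if i = c then x else 1) * (if i = c' then x else 1)

omit [Fintype ι] in
lemma cf_integrable (c c' i : ι) : Integrable (cf c c' i) (gaussianReal 0 1) := by
  unfold cf
  rcases eq_or_ne i c with rfl | hc <;> rcases eq_or_ne i c' with h | h
  · subst h
    refine integrable_sq_g.congr (Filter.Eventually.of_forall fun x => ?_)
    simp [pow_two]
  · simp only [if_pos rfl, if_neg h, mul_one]
    exact integrable_id_g
  · subst h
    simp only [if_pos rfl, if_neg hc, one_mul]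
    exact integrable_id_g
  · simp only [if_neg hc, if_neg h, mul_one]
    exact integrable_const 1

lemma prod_cf (c c' : ι) (w : ι → ℝ) : ∏ i, cf c c' i (w i) = w c * w c' := by
  unfold cf
  rw [Finset.prod_mul_distrib, Finset.prod_ite_eq' Finset.univ c w,
    Finset.prod_ite_eq' Finset.univ c' w]
  simp

lemma coord_integrable (c c' : ι) :
    Integrable (fun w : ι → ℝ => w c * w c') (stdGaussian ι) := by
  have h := myIntegrable_prod (gaussianReal 0 1) (f := cf c c') (fun i => cf_integrable c c' i)
  exact h.congr (Filter.Eventually.of_forall fun w => prod_cf c c' w)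

lemma coord_integral (c c' : ι) :
    ∫ w, w c * w c' ∂(stdGaussian ι) = if c = c' then sigSq else 0 := by
  have h : ∫ w, w c * w c' ∂(stdGaussian ι)
      = ∏ i, ∫ x, cf c c' i x ∂(gaussianReal 0 1) := by
    rw [← myIntegral_prod (gaussianReal 0 1) (cf c c')]
    exact integral_congr_ae (Filter.Eventually.of_forall fun w => (prod_cf c c' w).symm)
  rw [h]
  rcases eq_or_ne c c' with rfl | hne
  · rw [if_pos rfl]
    have : ∀ i, ∫ x, cf c c i x ∂(gaussianReal 0 1) = if i = c then sigSq else 1 := by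
      intro i
      rcases eq_or_ne i c with h | hic
      · rw [if_pos h, h]
        have h2 : ∫ x, cf c c c x ∂(gaussianReal 0 1) = ∫ x, x ^ 2 ∂(gaussianReal 0 1) :=
          integral_congr_ae (Filter.Eventually.of_forall fun x => by simp [cf, pow_two])
        rw [h2]
        rfl
      · rw [if_neg hic]
        unfold cf
        simp only [if_neg hic]
        simp
    rw [Finset.prod_congr rfl fun i _ => this i, Finset.prod_ite_eq' Finset.univ c fun _ => sigSq]
    simp
  · rw [if_neg hne]
    refine Finset.prod_eq_zero (Finset.mem_univ c) ?_
    have h2 : ∫ x, cf c c' c x ∂(gaussianReal 0 1) = ∫ x, x ∂(gaussianReal 0 1) :=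
      integral_congr_ae (Filter.Eventually.of_forall fun x => by simp [cf, if_neg hne])
    rw [h2]
    exact integral_id_g

lemma integral_dot (A B : ι → ℝ) :
    ∫ w, (∑ c, A c * w c) * (∑ c, B c * w c) ∂(stdGaussian ι)
      = sigSq * ∑ c, A c * B c := by
  have hrw : ∀ w : ι → ℝ, (∑ c, A c * w c) * (∑ c, B c * w c)
      = ∑ c, ∑ c', (A c * B c') * (w c * w c') := by
    intro w
    rw [Finset.sum_mul_sum]
    refine Finset.sum_congr rfl fun c _ => Finset.sum_congr rfl fun c' _ => by ring
  simp_rw [hrw]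
  rw [integral_finset_sum _ fun c _ => integrable_finset_sum _ fun c' _ =>
    ((coord_integrable c c').const_mul _)]
  have : ∀ c, ∫ w, ∑ c', (A c * B c') * (w c * w c') ∂(stdGaussian ι)
      = ∑ c', (A c * B c') * (if c = c' then sigSq else 0) := by
    intro c
    rw [integral_finset_sum _ fun c' _ => ((coord_integrable c c').const_mul _)]
    exact Finset.sum_congr rfl fun c' _ => by rw [integral_const_mul, coord_integral]
  rw [Finset.sum_congr rfl fun c _ => this c]
  rw [Finset.mul_sum]
  refine Finset.sum_congr rfl fun c _ => ?_
  rw [Finset.sum_eq_single c]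
  · rw [if_pos rfl]; ring
  · intro c' _ h; rw [if_neg (Ne.symm h), mul_zero]
  · intro h; exact absurd (Finset.mem_univ c) h

end Coord

/-! ### Rayleigh quotient infrastructure -/

section Rayleigh

variable {n κ : Type*} [Fintype n] [Fintype κ]

lemma qf' (σ : ℝ) (P : n → κ → ℝ) (v : n → ℝ) :
    v ⬝ᵥ ((Matrix.of fun a b => σ * ∑ c, P a c * P b c) *ᵥ v)
      = σ * ∑ c, (∑ a, v a * P a c) ^ 2 := by
  simp only [dotProduct, Matrix.mulVec, Matrix.of_apply, pow_two, Finset.sum_mul_sum,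
    Finset.sum_mul, Finset.mul_sum]
  conv_rhs => rw [Finset.sum_comm]
  refine Finset.sum_congr rfl fun a _ => ?_
  rw [Finset.sum_comm]
  refine Finset.sum_congr rfl fun c _ => Finset.sum_congr rfl fun b _ => by ring

lemma sphere_nonempty [Nonempty n] [DecidableEq n] :
    Nonempty {v : n → ℝ // ∑ i, v i ^ 2 = 1} := by
  refine ⟨⟨fun i => if i = Classical.arbitrary n then 1 else 0, ?_⟩⟩
  have : ∀ i : n, (if i = Classical.arbitrary n then (1:ℝ) else 0) ^ 2
      = if i = Classical.arbitrary n then 1 else 0 := by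
    intro i; split <;> norm_num
  rw [Finset.sum_congr rfl fun i _ => this i, Finset.sum_ite_eq' Finset.univ]
  simp

lemma abs_le_one_of_unit {v : n → ℝ} (hv : ∑ i, v i ^ 2 = 1) (i : n) : |v i| ≤ 1 := by
  rw [← sq_le_one_iff_abs_le_one]
  calc v i ^ 2 ≤ ∑ j, v j ^ 2 :=
        Finset.single_le_sum (fun j _ => sq_nonneg (v j)) (Finset.mem_univ i)
    _ = 1 := hv

lemma bddAbove_rayleigh (M : Matrix n n ℝ) :
    BddAbove (Set.range fun v : {v : n → ℝ // ∑ i, v i ^ 2 = 1} =>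
      (v : n → ℝ) ⬝ᵥ (M *ᵥ (v : n → ℝ))) := by
  refine ⟨∑ i, ∑ j, |M i j|, ?_⟩
  rintro _ ⟨⟨v, hv⟩, rfl⟩
  calc (v : n → ℝ) ⬝ᵥ (M *ᵥ v) = ∑ i, ∑ j, v i * (M i j * v j) := by
        simp [dotProduct, Matrix.mulVec, Finset.mul_sum]
    _ ≤ ∑ i, ∑ j, |M i j| := by
        refine Finset.sum_le_sum fun i _ => Finset.sum_le_sum fun j _ => ?_
        calc v i * (M i j * v j) ≤ |v i * (M i j * v j)| := le_abs_self _
          _ = |v i| * |M i j| * |v j| := by rw [abs_mul, abs_mul]; ring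
          _ ≤ 1 * |M i j| * |v j| :=
              mul_le_mul_of_nonneg_right
                (mul_le_mul_of_nonneg_right (abs_le_one_of_unit hv i) (abs_nonneg _))
                (abs_nonneg _)
          _ ≤ 1 * |M i j| * 1 :=
              mul_le_mul_of_nonneg_left (abs_le_one_of_unit hv j) (by positivity)
          _ = |M i j| := by ring

lemma le_lamMax (M : Matrix n n ℝ) (v : {v : n → ℝ // ∑ i, v i ^ 2 = 1}) :
    (v : n → ℝ) ⬝ᵥ (M *ᵥ (v : n → ℝ)) ≤ lamMax M :=
  le_ciSup (bddAbove_rayleigh M) v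

lemma lamMax_le [Nonempty {v : n → ℝ // ∑ i, v i ^ 2 = 1}] (M : Matrix n n ℝ) {C : ℝ}
    (h : ∀ v : {v : n → ℝ // ∑ i, v i ^ 2 = 1}, (v : n → ℝ) ⬝ᵥ (M *ᵥ (v : n → ℝ)) ≤ C) :
    lamMax M ≤ C :=
  ciSup_le h

lemma le_lamMin [Nonempty {v : n → ℝ // ∑ i, v i ^ 2 = 1}] (M : Matrix n n ℝ) {C : ℝ}
    (h : ∀ v : {v : n → ℝ // ∑ i, v i ^ 2 = 1}, C ≤ (v : n → ℝ) ⬝ᵥ (M *ᵥ (v : n → ℝ))) :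
    C ≤ lamMin M :=
  le_ciInf h

lemma lamMin_le (M : Matrix n n ℝ)
    (hb : BddBelow (Set.range fun v : {v : n → ℝ // ∑ i, v i ^ 2 = 1} =>
      (v : n → ℝ) ⬝ᵥ (M *ᵥ (v : n → ℝ))))
    (v : {v : n → ℝ // ∑ i, v i ^ 2 = 1}) :
    lamMin M ≤ (v : n → ℝ) ⬝ᵥ (M *ᵥ (v : n → ℝ)) :=
  ciInf_le hb v

/-- The Rayleigh quadratic form, as an additive monoid hom in the matrix. -/
noncomputable def rayQF (v : n → ℝ) : Matrix n n ℝ →+ ℝ where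
  toFun M := v ⬝ᵥ (M *ᵥ v)
  map_zero' := by simp
  map_add' A B := by show v ⬝ᵥ ((A + B) *ᵥ v) = v ⬝ᵥ (A *ᵥ v) + v ⬝ᵥ (B *ᵥ v); rw [Matrix.add_mulVec, dotProduct_add]

lemma qf_sum {N k : ℕ} (M : Fin N → Fin k → Matrix n n ℝ) (v : n → ℝ) :
    v ⬝ᵥ ((∑ j : Fin N, ∑ s : Fin k, M j s) *ᵥ v)
      = ∑ j : Fin N, ∑ s : Fin k, v ⬝ᵥ (M j s *ᵥ v) := by
  show rayQF v (∑ j : Fin N, ∑ s : Fin k, M j s) = _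
  rw [map_sum]
  exact Finset.sum_congr rfl fun j _ => by rw [map_sum]; rfl

end Rayleigh

/-! ### Sum splitting and a Minkowski-type bound -/

lemma split_sum {α : Type*} [AddCommMonoid α] {N k d : ℕ} (f : Fin N × Fin k × Fin d → α) :
    ∑ r : Fin N × Fin k × Fin d, f r = ∑ t : Fin N × Fin k, ∑ a : Fin d, f (t.1, t.2, a) := by
  rw [Fintype.sum_prod_type, Fintype.sum_prod_type]
  exact Finset.sum_congr rfl fun j _ => by rw [Fintype.sum_prod_type]

lemma norm_sq_eucl {ρ : Type*} [Fintype ρ] (x : EuclideanSpace ℝ ρ) :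
    ‖x‖ ^ 2 = ∑ c, x c ^ 2 := by
  rw [EuclideanSpace.norm_eq, Real.sq_sqrt (Finset.sum_nonneg fun c _ => sq_nonneg _)]
  exact Finset.sum_congr rfl fun c _ => by rw [Real.norm_eq_abs, sq_abs]

lemma eucl_sum_apply {γ ρ : Type*} [Fintype γ] [Fintype ρ] (y : γ → EuclideanSpace ℝ ρ) (c : ρ) :
    (∑ t, y t) c = ∑ t, y t c :=
  by rw [WithLp.ofLp_sum, Finset.sum_apply]

lemma minkowski_bound {γ ρ : Type*} [Fintype γ] [Fintype ρ] (g : γ → ρ → ℝ) (B : γ → ℝ)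
    (h : ∀ t, ∑ c, g t c ^ 2 ≤ B t) :
    ∑ c, (∑ t, g t c) ^ 2 ≤ (∑ t, Real.sqrt (B t)) ^ 2 := by
  let y : γ → EuclideanSpace ℝ ρ := fun t => WithLp.toLp 2 (g t : ρ → ℝ)
  have h1 : ∑ c, (∑ t, g t c) ^ 2 = ‖∑ t, y t‖ ^ 2 := by
    rw [norm_sq_eucl]
    exact Finset.sum_congr rfl fun c _ => by rw [eucl_sum_apply]
  rw [h1]
  have h2 : ‖∑ t, y t‖ ≤ ∑ t, Real.sqrt (B t) := by
    refine (norm_sum_le _ _).trans (Finset.sum_le_sum fun t _ => ?_)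
    have h4 : ‖y t‖ ^ 2 = ∑ c, g t c ^ 2 := norm_sq_eucl (y t)
    have h3 : ‖y t‖ = Real.sqrt (∑ c, g t c ^ 2) := by
      rw [← h4, Real.sqrt_sq (norm_nonneg _)]
    rw [h3]
    exact Real.sqrt_le_sqrt (h t)
  exact pow_le_pow_left₀ (norm_nonneg _) h2 2

/-! ### Closed forms for the covariance matrices -/

section ClosedForm

variable {d p k N : ℕ} (L : Matrix (Fin N × Fin k × Fin d) (Fin N × Fin k × Fin p) ℝ)

lemma covX_eq (j : Fin N) (s : Fin k) :
    covX L j s = Matrix.of fun a b =>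
      sigSq * ∑ c : Fin N × Fin k × Fin p, L (j, s, a) c * L (j, s, b) c := by
  ext a b
  show (∫ w, (L *ᵥ w) (j, s, a) * (L *ᵥ w) (j, s, b)
    ∂(stdGaussian (Fin N × Fin k × Fin p))) = _
  have hmv : ∀ (r : Fin N × Fin k × Fin d) (w : (Fin N × Fin k × Fin p) → ℝ),
      (L *ᵥ w) r = ∑ c, L r c * w c := by
    intro r w
    simp [Matrix.mulVec, dotProduct]
  simp_rw [hmv]
  rw [integral_dot]
  rfl

lemma fullCov_eq :
    fullCov L = Matrix.of fun r r' =>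
      sigSq * ∑ c : Fin N × Fin k × Fin p, L r c * L r' c := by
  ext r r'
  show (∫ w, (L *ᵥ w) r * (L *ᵥ w) r' ∂(stdGaussian (Fin N × Fin k × Fin p))) = _
  have hmv : ∀ (r : Fin N × Fin k × Fin d) (w : (Fin N × Fin k × Fin p) → ℝ),
      (L *ᵥ w) r = ∑ c, L r c * w c := by
    intro r w
    simp [Matrix.mulVec, dotProduct]
  simp_rw [hmv]
  rw [integral_dot]
  rfl

lemma covXtilde_eq (j : Fin N) (s : Fin k) :
    covXtilde L j s = Matrix.of fun a b =>
      sigSq * ∑ c : Fin k × Fin p, L (j, s, a) (j, c) * L (j, s, b) (j, c) := by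
  ext a b
  show (∫ w, ((Lblk L j j) *ᵥ (fun c => w (j, c))) (s, a)
        * ((Lblk L j j) *ᵥ (fun c => w (j, c))) (s, b)
      ∂(stdGaussian (Fin N × Fin k × Fin p))) = _
  have hmv : ∀ (a : Fin d) (w : (Fin N × Fin k × Fin p) → ℝ),
      ((Lblk L j j) *ᵥ (fun c => w (j, c))) (s, a)
        = ∑ c : Fin N × Fin k × Fin p,
            (if c.1 = j then L (j, s, a) (j, c.2) else 0) * w c := by
    intro a w
    rw [Fintype.sum_prod_type]
    rw [Finset.sum_eq_single j]
    · simp [Lblk, Matrix.mulVec, dotProduct]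
    · intro i _ hij
      refine Finset.sum_eq_zero fun c _ => ?_
      rw [if_neg hij, zero_mul]
    · intro h; exact absurd (Finset.mem_univ j) h
  simp_rw [hmv]
  rw [integral_dot]
  show _ = sigSq * _
  congr 1
  rw [Fintype.sum_prod_type]
  rw [Finset.sum_eq_single j]
  · simp
  · intro i _ hij
    refine Finset.sum_eq_zero fun c _ => ?_
    rw [if_neg hij, zero_mul]
  · intro h; exact absurd (Finset.mem_univ j) h

lemma qf_covX (j : Fin N) (s : Fin k) (v : Fin d → ℝ) :
    v ⬝ᵥ (covX L j s *ᵥ v)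
      = sigSq * ∑ c : Fin N × Fin k × Fin p, (∑ a, v a * L (j, s, a) c) ^ 2 := by
  rw [covX_eq]
  exact qf' sigSq (fun a c => L (j, s, a) c) v

lemma qf_fullCov (v : (Fin N × Fin k × Fin d) → ℝ) :
    v ⬝ᵥ (fullCov L *ᵥ v)
      = sigSq * ∑ c : Fin N × Fin k × Fin p, (∑ r, v r * L r c) ^ 2 := by
  rw [fullCov_eq]
  exact qf' sigSq (fun r c => L r c) v

lemma qf_covXtilde (j : Fin N) (s : Fin k) (v : Fin d → ℝ) :
    v ⬝ᵥ (covXtilde L j s *ᵥ v)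
      = sigSq * ∑ c : Fin k × Fin p, (∑ a, v a * L (j, s, a) (j, c)) ^ 2 := by
  rw [covXtilde_eq]
  exact qf' sigSq (fun a c => L (j, s, a) (j, c)) v

/-- Per-block bound: the quadratic form of `covX` at an arbitrary vector is at most
`‖u‖² · lamMax (covX)`. -/
lemma block_qf_le (hd : 0 < d) (j : Fin N) (s : Fin k) (u : Fin d → ℝ) :
    sigSq * ∑ c : Fin N × Fin k × Fin p, (∑ a, u a * L (j, s, a) c) ^ 2
      ≤ (∑ a, u a ^ 2) * lamMax (covX L j s) := by
  have hdne : Nonempty (Fin d) := ⟨⟨0, hd⟩⟩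
  have husq : 0 ≤ ∑ a, u a ^ 2 := Finset.sum_nonneg fun a _ => sq_nonneg _
  have hlam : 0 ≤ lamMax (covX L j s) := by
    obtain ⟨v⟩ := (sphere_nonempty : Nonempty {v : Fin d → ℝ // ∑ i, v i ^ 2 = 1})
    refine le_trans ?_ (le_lamMax (covX L j s) v)
    rw [qf_covX]
    exact mul_nonneg sigSq_nonneg (Finset.sum_nonneg fun c _ => sq_nonneg _)
  rcases eq_or_lt_of_le husq with h0 | hpos
  · -- u = 0
    have hz : ∀ a, u a = 0 := by
      intro a
      have := (Finset.sum_eq_zero_iff_of_nonneg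
        (fun a (_ : a ∈ Finset.univ) => sq_nonneg (u a))).mp h0.symm a (Finset.mem_univ a)
      exact (pow_eq_zero_iff two_ne_zero).mp this
    have hzero : ∀ c : Fin N × Fin k × Fin p, (∑ a, u a * L (j, s, a) c) = 0 := by
      intro c
      exact Finset.sum_eq_zero fun a _ => by rw [hz a, zero_mul]
    calc sigSq * ∑ c : Fin N × Fin k × Fin p, (∑ a, u a * L (j, s, a) c) ^ 2
        = 0 := by
          rw [Finset.sum_congr rfl fun c _ => by rw [hzero c]]
          simp
      _ ≤ (∑ a, u a ^ 2) * lamMax (covX L j s) := mul_nonneg husq hlam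
  · -- normalize u
    set m := Real.sqrt (∑ a, u a ^ 2) with hm
    have hm0 : 0 < m := Real.sqrt_pos.mpr hpos
    have hmsq : m ^ 2 = ∑ a, u a ^ 2 := Real.sq_sqrt husq
    have hwunit : ∑ a, (u a / m) ^ 2 = 1 := by
      simp only [div_pow]
      rw [← Finset.sum_div, hmsq]
      exact div_self (ne_of_gt hpos)
    have hle := le_lamMax (covX L j s) ⟨fun a => u a / m, hwunit⟩
    rw [qf_covX] at hle
    have hFw : ∀ c, (∑ a, (u a / m) * L (j, s, a) c) = (∑ a, u a * L (j, s, a) c) / m := by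
      intro c
      rw [Finset.sum_div]
      exact Finset.sum_congr rfl fun a _ => by ring
    have hle2 : sigSq * ∑ c : Fin N × Fin k × Fin p,
        ((∑ a, u a * L (j, s, a) c) / m) ^ 2 ≤ lamMax (covX L j s) := by
      refine le_trans (le_of_eq ?_) hle
      congr 1
      exact Finset.sum_congr rfl fun c _ => by rw [hFw c]
    have h2 : sigSq * ∑ c : Fin N × Fin k × Fin p, (∑ a, u a * L (j, s, a) c) ^ 2
        = (∑ a, u a ^ 2) * (sigSq * ∑ c : Fin N × Fin k × Fin p,
            ((∑ a, u a * L (j, s, a) c) / m) ^ 2) := by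
      simp only [div_pow]
      rw [← Finset.sum_div, ← hmsq]
      field_simp
    rw [h2]
    exact mul_le_mul_of_nonneg_left hle2 husq

end ClosedForm

/-- For a `k`-causal Gaussian process `X = 𝐋 W` with decoupled process
`X̃` and `λ_min(Σ_t E[X̃_t X̃_tᵀ]) > 0`:
`λ_max(E[X_{0:T−1}X_{0:T−1}ᵀ]) / λ_min(Σ_t E[X_t X_tᵀ])
  ≤ (Σ_t λ_max(E[X_t X_tᵀ])) / λ_min(Σ_t E[X̃_t X̃_tᵀ])`. -/
theorem fullCov_ratio_le
    (d p k N : ℕ) (hd : 0 < d) (hp : 0 < p) (hk : 0 < k) (hN : 0 < N)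
    (L : Matrix (Fin N × Fin k × Fin d) (Fin N × Fin k × Fin p) ℝ)
    (hL : ∀ i j : Fin N, i < j → ∀ r c, L (i, r) (j, c) = 0)
    (hmin : 0 < lamMin (∑ j : Fin N, ∑ s : Fin k, covXtilde L j s)) :
    lamMax (fullCov L) / lamMin (∑ j : Fin N, ∑ s : Fin k, covX L j s)
      ≤ (∑ j : Fin N, ∑ s : Fin k, lamMax (covX L j s))
          / lamMin (∑ j : Fin N, ∑ s : Fin k, covXtilde L j s) := by
  have hdne : Nonempty (Fin d) := ⟨⟨0, hd⟩⟩
  have hkne : Nonempty (Fin k) := ⟨⟨0, hk⟩⟩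
  have hNne : Nonempty (Fin N) := ⟨⟨0, hN⟩⟩
  have hSd : Nonempty {v : Fin d → ℝ // ∑ i, v i ^ 2 = 1} := sphere_nonempty
  have hSfull : Nonempty {v : (Fin N × Fin k × Fin d) → ℝ // ∑ i, v i ^ 2 = 1} :=
    sphere_nonempty
  have hlam_nonneg : ∀ (j : Fin N) (s : Fin k), 0 ≤ lamMax (covX L j s) := by
    intro j s
    obtain ⟨v⟩ := hSd
    refine le_trans ?_ (le_lamMax (covX L j s) v)
    rw [qf_covX]
    exact mul_nonneg sigSq_nonneg (Finset.sum_nonneg fun c _ => sq_nonneg _)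
  set C := ∑ j : Fin N, ∑ s : Fin k, lamMax (covX L j s) with hC
  have hC0 : 0 ≤ C :=
    Finset.sum_nonneg fun j _ => Finset.sum_nonneg fun s _ => hlam_nonneg j s
  -- Step 1 : lamMin (∑ covXtilde) ≤ lamMin (∑ covX)
  have hDB : lamMin (∑ j : Fin N, ∑ s : Fin k, covXtilde L j s)
      ≤ lamMin (∑ j : Fin N, ∑ s : Fin k, covX L j s) := by
    refine le_lamMin _ fun v => ?_
    have h1 : lamMin (∑ j : Fin N, ∑ s : Fin k, covXtilde L j s)
        ≤ (v : Fin d → ℝ) ⬝ᵥ ((∑ j : Fin N, ∑ s : Fin k, covXtilde L j s)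
            *ᵥ (v : Fin d → ℝ)) := by
      refine lamMin_le _ ⟨0, ?_⟩ v
      rintro _ ⟨u, rfl⟩
      show (0:ℝ) ≤ (u : Fin d → ℝ) ⬝ᵥ ((∑ j : Fin N, ∑ s : Fin k, covXtilde L j s)
        *ᵥ (u : Fin d → ℝ))
      rw [qf_sum]
      refine Finset.sum_nonneg fun j _ => Finset.sum_nonneg fun s _ => ?_
      rw [qf_covXtilde]
      exact mul_nonneg sigSq_nonneg (Finset.sum_nonneg fun c _ => sq_nonneg _)
    refine h1.trans ?_
    rw [qf_sum, qf_sum]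
    refine Finset.sum_le_sum fun j _ => Finset.sum_le_sum fun s _ => ?_
    rw [qf_covXtilde, qf_covX]
    refine mul_le_mul_of_nonneg_left ?_ sigSq_nonneg
    conv_rhs => rw [Fintype.sum_prod_type]
    refine Finset.single_le_sum (f := fun i => ∑ c : Fin k × Fin p,
      (∑ a, (v : Fin d → ℝ) a * L (j, s, a) (i, c)) ^ 2) ?_ (Finset.mem_univ j)
    intro i _
    positivity
  have hD : 0 < lamMin (∑ j : Fin N, ∑ s : Fin k, covXtilde L j s) := hmin
  -- Step 2 : lamMax (fullCov L) ≤ C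
  have hAC : lamMax (fullCov L) ≤ C := by
    refine lamMax_le _ fun vv => ?_
    obtain ⟨v, hv⟩ := vv
    show v ⬝ᵥ (fullCov L *ᵥ v) ≤ C
    rw [qf_fullCov]
    have hsplit : ∀ c : Fin N × Fin k × Fin p, (∑ r, v r * L r c)
        = ∑ t : Fin N × Fin k, ∑ a, v (t.1, t.2, a) * L (t.1, t.2, a) c :=
      fun c => split_sum (fun r => v r * L r c)
    calc sigSq * ∑ c : Fin N × Fin k × Fin p, (∑ r, v r * L r c) ^ 2
        = ∑ c : Fin N × Fin k × Fin p, (∑ t : Fin N × Fin k,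
            Real.sqrt sigSq * ∑ a, v (t.1, t.2, a) * L (t.1, t.2, a) c) ^ 2 := by
          rw [Finset.mul_sum]
          refine Finset.sum_congr rfl fun c _ => ?_
          rw [hsplit c, ← Finset.mul_sum, mul_pow, Real.sq_sqrt sigSq_nonneg]
      _ ≤ (∑ t : Fin N × Fin k, Real.sqrt
            ((∑ a, v (t.1, t.2, a) ^ 2) * lamMax (covX L t.1 t.2))) ^ 2 := by
          refine minkowski_bound _ _ fun t => ?_
          have heq : ∑ c : Fin N × Fin k × Fin p,
              (Real.sqrt sigSq * ∑ a, v (t.1, t.2, a) * L (t.1, t.2, a) c) ^ 2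
              = sigSq * ∑ c : Fin N × Fin k × Fin p,
                  (∑ a, v (t.1, t.2, a) * L (t.1, t.2, a) c) ^ 2 := by
            rw [Finset.mul_sum]
            exact Finset.sum_congr rfl fun c _ => by
              rw [mul_pow, Real.sq_sqrt sigSq_nonneg]
          rw [heq]
          exact block_qf_le L hd t.1 t.2 (fun a => v (t.1, t.2, a))
      _ ≤ (Real.sqrt (∑ t : Fin N × Fin k, ∑ a, v (t.1, t.2, a) ^ 2)
            * Real.sqrt (∑ t : Fin N × Fin k, lamMax (covX L t.1 t.2))) ^ 2 := by
          refine pow_le_pow_left₀ (Finset.sum_nonneg fun t _ => Real.sqrt_nonneg _) ?_ 2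
          have hmul : ∀ t : Fin N × Fin k,
              Real.sqrt ((∑ a, v (t.1, t.2, a) ^ 2) * lamMax (covX L t.1 t.2))
                = Real.sqrt (∑ a, v (t.1, t.2, a) ^ 2)
                  * Real.sqrt (lamMax (covX L t.1 t.2)) :=
            fun t => Real.sqrt_mul (Finset.sum_nonneg fun a _ => sq_nonneg _) _
          rw [Finset.sum_congr rfl fun t _ => hmul t]
          exact Real.sum_sqrt_mul_sqrt_le _
            (fun t => Finset.sum_nonneg fun a _ => sq_nonneg _)
            (fun t => hlam_nonneg t.1 t.2)
      _ = C := by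
          have h1 : ∑ t : Fin N × Fin k, ∑ a, v (t.1, t.2, a) ^ 2 = 1 :=
            (split_sum (fun r => v r ^ 2)).symm.trans hv
          have h2 : ∑ t : Fin N × Fin k, lamMax (covX L t.1 t.2) = C := by
            rw [hC, Fintype.sum_prod_type]
          rw [h1, h2, Real.sqrt_one, one_mul, Real.sq_sqrt hC0]
  exact div_le_div₀ hC0 hAC hD hDB
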